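/- arXiv:1910.04198 — 9 statements merged into one kernel-verified Lean document; each statement's English description precedes it below -/
import Mathlib

section
/- Let n ≥ 2, let a = (a_1,…,a_{n−1}) and b = (b_1,…,b_{n−1}) be tuples of integers, and let x ∈ ℤ. Then Σ'_{l_1=a_1..b_1} Σ'_{l_2=a_2..b_2} ⋯ Σ'_{l_{n−1}=a_{n−1}..b_{n−1}} sgt(l_1,…,l_{n−1}) = Σ_{ε ∈ {0,1}^{n−1}} (−1)^{ε_1+⋯+ε_{n−1}} · sgt(m_1,…,m_{n−1},x), where m_i = a_i if ε_i = 0 and m_i = b_i + 1 if ε_i = 1. -/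
/-- The signed sum `Σ'_{l=a..b} f(l)`: the ordinary sum over `[a,b]` when `a ≤ b`,
and `-Σ_{l=b+1}^{a-1} f(l)` when `a > b`. -/
noncomputable def ssum (a b : ℤ) (f : ℤ → ℤ) : ℤ :=
  if a ≤ b then ∑ l ∈ Finset.Icc a b, f l else -∑ l ∈ Finset.Icc (b + 1) (a - 1), f l

/-- Iterated signed sum over the box `[a 0, b 0] × ⋯ × [a (m-1), b (m-1)]`,
one signed sum per coordinate. -/
noncomputable def sbox : (m : ℕ) → (Fin m → ℤ) → (Fin m → ℤ) → ((Fin m → ℤ) → ℤ) → ℤ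
  | 0, _, _, f => f Fin.elim0
  | m + 1, a, b, f =>
      ssum (a 0) (b 0) fun l =>
        sbox m (fun i => a i.succ) (fun i => b i.succ) fun t => f (Fin.cons l t)

/-- The signed Gelfand–Tsetlin count: `sgt k = 1` for tuples of length `≤ 1`, and
`sgt (k_1,…,k_n) = Σ'_{l_1=k_1..k_2} ⋯ Σ'_{l_{n-1}=k_{n-1}..k_n} sgt (l_1,…,l_{n-1})`. -/
noncomputable def sgt : (n : ℕ) → (Fin n → ℤ) → ℤ
  | 0, _ => 1
  | 1, _ => 1
  | n + 2, k => sbox (n + 1) (fun i => k i.castSucc) (fun i => k i.succ) (sgt (n + 1))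

/-! As a function of `m`, `sgt (m₁,…,m_{n-1},x)` is a discrete antiderivative of `sgt` on
`ℤ^{n-1}`: moving the lower limit of the outermost signed sum from `k` to `k + 1` removes exactly
the term `l = k`, so its mixed difference in all `n - 1` variables is `sgt` itself. Summing a
mixed difference over a box telescopes, one coordinate at a time, to the alternating sum over the
corners. -/

open Finset

theorem ssum_eq_add_ssum_add_one (a b : ℤ) (f : ℤ → ℤ) :
    ssum a b f = f a + ssum (a + 1) b f := by
  unfold ssum
  rcases lt_trichotomy a b with hab | rfl | hab
  · rw [if_pos hab.le, if_pos (by omega), Icc_eq_cons_Ioc hab.le, sum_cons,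
      Icc_add_one_left_eq_Ioc]
  · simp
  · rw [if_neg (by omega), if_neg (by omega), add_sub_cancel_right,
      Icc_eq_cons_Ico (show b + 1 ≤ a by omega), sum_cons, Icc_sub_one_right_eq_Ico]
    ring

theorem ssum_telescope (F : ℤ → ℤ) (a b : ℤ) :
    ssum a b (fun l => F l - F (l + 1)) = F a - F (b + 1) := by
  induction a using Int.inductionOn' (b := b + 1) with
  | zero => simp [ssum]
  | succ k _ ih => linarith [ssum_eq_add_ssum_add_one k b fun l => F l - F (l + 1)]
  | pred k _ ih =>
    have := ssum_eq_add_ssum_add_one (k - 1) b fun l => F l - F (l + 1)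
    rw [sub_add_cancel] at this
    linarith

theorem ssum_finset_sum {ι : Type*} (s : Finset ι) (a b : ℤ) (g : ι → ℤ → ℤ) :
    ssum a b (fun l => ∑ i ∈ s, g i l) = ∑ i ∈ s, ssum a b (g i) := by
  unfold ssum
  split_ifs
  · exact sum_comm
  · rw [sum_comm, sum_neg_distrib]

/-- `mixedDiff m G c` is `(-1)^m` times the mixed forward difference `Δ₁ ⋯ Δₘ G` at `c`. -/
def mixedDiff : (m : ℕ) → ((Fin m → ℤ) → ℤ) → (Fin m → ℤ) → ℤ
  | 0, G, c => G c
  | m + 1, G, c =>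
      mixedDiff m (fun t => G (Fin.cons (c 0) t) - G (Fin.cons (c 0 + 1) t)) (Fin.tail c)

theorem mixedDiff_succ_cons {m : ℕ} (G : (Fin (m + 1) → ℤ) → ℤ) (l : ℤ)
    (t : Fin m → ℤ) :
    mixedDiff (m + 1) G (Fin.cons l t) =
      mixedDiff m (fun t => G (Fin.cons l t) - G (Fin.cons (l + 1) t)) t := by
  simp only [mixedDiff, Fin.cons_zero, Fin.tail_cons]

def corner {m : ℕ} (a b : Fin m → ℤ) (ε : Fin m → Bool) : Fin m → ℤ :=
  fun i => if ε i then b i + 1 else a i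

theorem corner_cons {m : ℕ} (a b : Fin (m + 1) → ℤ) (v : Bool) (ε : Fin m → Bool) :
    corner a b (Fin.cons v ε) =
      Fin.cons (if v then b 0 + 1 else a 0)
        (corner (fun i => a i.succ) (fun i => b i.succ) ε) := by
  ext i
  cases i using Fin.cases <;> simp [corner]

theorem card_filter_cons_eq_true {m : ℕ} (v : Bool) (ε : Fin m → Bool) :
    #{i | (Fin.cons v ε : Fin (m + 1) → Bool) i = true} =
      (if v then 1 else 0) + #{i | ε i = true} := by
  rw [Fin.card_filter_univ_succ']
  simp

theorem sum_fun_bool_succ {m : ℕ} (F : (Fin (m + 1) → Bool) → ℤ) :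
    ∑ ε, F ε = ∑ ε : Fin m → Bool, (F (Fin.cons false ε) + F (Fin.cons true ε)) := by
  rw [← (Fin.consEquiv fun _ => Bool).sum_comp, Fintype.sum_prod_type, sum_comm]
  simp [Fin.consEquiv, add_comm]

theorem sbox_mixedDiff (m : ℕ) (a b : Fin m → ℤ) (G : (Fin m → ℤ) → ℤ) :
    sbox m a b (mixedDiff m G) =
      ∑ ε : Fin m → Bool, (-1 : ℤ) ^ #{i | ε i = true} * G (corner a b ε) := by
  induction m with
  | zero => simp [sbox, mixedDiff, Subsingleton.elim _ (Fin.elim0 : Fin 0 → ℤ)]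
  | succ m ih =>
    simp only [sbox, mixedDiff_succ_cons, ih, ssum_finset_sum]
    rw [sum_fun_bool_succ]
    refine sum_congr rfl fun ε _ => ?_
    simp only [mul_sub]
    rw [ssum_telescope fun l => (-1) ^ #{i | ε i = true} * G (Fin.cons l _), corner_cons,
      corner_cons, card_filter_cons_eq_true, card_filter_cons_eq_true]
    simp only [Bool.false_eq_true, if_false, if_true, zero_add, pow_add, pow_one]
    ring

theorem mixedDiff_sbox_snoc (m : ℕ) (x : ℤ) (f : (Fin m → ℤ) → ℤ) :
    mixedDiff m (fun c => sbox m c (fun i => (Fin.snoc c x : Fin (m + 1) → ℤ) i.succ) f) =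
      f := by
  induction m with
  | zero => ext c; simp [mixedDiff, sbox, Subsingleton.elim c Fin.elim0]
  | succ m ih =>
    have peel (k : ℤ) (t : Fin m → ℤ) :
        sbox (m + 1) (Fin.cons k t)
            (fun i => (Fin.snoc (Fin.cons k t) x : Fin (m + 2) → ℤ) i.succ) f =
          ssum k ((Fin.snoc t x : Fin (m + 1) → ℤ) 0) fun l =>
            sbox m t (fun i => (Fin.snoc t x : Fin (m + 1) → ℤ) i.succ)
              fun u => f (Fin.cons l u) := by
      simp only [sbox, ← Fin.cons_snoc_eq_snoc_cons, Fin.cons_zero, Fin.cons_succ]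
    ext c
    cases c using Fin.consCases with | cons l t => ?_
    rw [mixedDiff_succ_cons]
    simp only [peel, ssum_eq_add_ssum_add_one l, add_sub_cancel_right]
    exact congrFun (ih fun u => f (Fin.cons l u)) t

/-- For every `n ≥ 2`, the iterated signed sum of `sgt` over the box
`[a_1,b_1] × ⋯ × [a_{n-1},b_{n-1}]` equals the signed sum over the `2^{n-1}` corners
`m` (with `m_i = a_i` or `m_i = b_i + 1`) of `sgt (m_1,…,m_{n-1},x)`. -/
theorem sbox_sgt_corners (n : ℕ) (a b : Fin (n + 1) → ℤ) (x : ℤ) :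
    sbox (n + 1) a b (sgt (n + 1)) =
      ∑ ε : Fin (n + 1) → Bool,
        (-1 : ℤ) ^ (Finset.univ.filter fun i => ε i = true).card *
          sgt (n + 2) (Fin.snoc (fun i => if ε i then b i + 1 else a i) x) := by
  have sgt_snoc : (fun c => sgt (n + 2) (Fin.snoc c x)) =
      fun c => sbox (n + 1) c (fun i => (Fin.snoc c x : Fin (n + 2) → ℤ) i.succ)
        (sgt (n + 1)) := by
    ext c
    simp only [sgt, Fin.snoc_castSucc]
  calc sbox (n + 1) a b (sgt (n + 1))
      = sbox (n + 1) a b (mixedDiff (n + 1) fun c => sgt (n + 2) (Fin.snoc c x)) := by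
        rw [sgt_snoc, mixedDiff_sbox_snoc]
    _ = _ := sbox_mixedDiff (n + 1) a b _
end

section
/- For every n ≥ 2, every k = (k_1,…,k_n) ∈ ℤ^n, and every i with 1 ≤ i ≤ n−1, sgt(k_1,…,k_n) = −sgt(k_1,…,k_{i−1}, k_{i+1}+1, k_i−1, k_{i+2},…,k_n). -/
/-!
In the shifted coordinates `u_j = l_j + j` the move `swapAt i` is a plain transposition, so the
theorem says that `sgt` is alternating. Writing `Σ'_{l=a..b}` as the oriented sum over
`[a, b + 1)`, which is additive in the interval, one shows by induction on the length that the
chain sum `Σ'_{l_1=c_1..c_2} ⋯ Σ'_{l_m=c_m..c_{m+1}} f(l)` of an alternating `f` is alternating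
in `c`. A swap past the second position only changes the inner sum; for a swap at the first or
second position, splitting the affected interval leaves the sum of an antisymmetric function
over a square, which vanishes.
-/

open Finset

noncomputable def osum (a b : ℤ) (f : ℤ → ℤ) : ℤ :=
  ∑ x ∈ Ico a b, f x - ∑ x ∈ Ico b a, f x

theorem osum_swap (a b : ℤ) (f : ℤ → ℤ) : osum b a f = -osum a b f := by
  unfold osum; ring

theorem osum_of_le {a b : ℤ} (h : a ≤ b) (f : ℤ → ℤ) : osum a b f = ∑ x ∈ Ico a b, f x := by
  rw [osum, Ico_eq_empty_of_le h, sum_empty, sub_zero]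

theorem osum_add_osum (a b c : ℤ) (f : ℤ → ℤ) : osum a b f + osum b c f = osum a c f := by
  have sorted : ∀ {u v w : ℤ}, u ≤ v → v ≤ w → osum u v f + osum v w f = osum u w f :=
    fun huv hvw => by
      rw [osum_of_le huv, osum_of_le hvw, osum_of_le (huv.trans hvw),
        ← sum_union (Ico_disjoint_Ico_consecutive _ _ _), Ico_union_Ico_eq_Ico huv hvw]
  obtain ⟨h₁, h₂⟩ | ⟨h₁, h₂⟩ | ⟨h₁, h₂⟩ | ⟨h₁, h₂⟩ | ⟨h₁, h₂⟩ | ⟨h₁, h₂⟩ :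
      (a ≤ b ∧ b ≤ c) ∨ (a ≤ c ∧ c ≤ b) ∨ (b ≤ a ∧ a ≤ c) ∨ (b ≤ c ∧ c ≤ a) ∨
        (c ≤ a ∧ a ≤ b) ∨ (c ≤ b ∧ b ≤ a) := by omega
  all_goals linarith [sorted h₁ h₂, osum_swap a b f, osum_swap b c f, osum_swap a c f]

theorem osum_neg (a b : ℤ) (f : ℤ → ℤ) : osum a b (fun x => -f x) = -osum a b f := by
  simp only [osum, sum_neg_distrib]; ring

theorem osum_add (a b : ℤ) (f g : ℤ → ℤ) :
    osum a b (fun x => f x + g x) = osum a b f + osum a b g := by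
  simp only [osum, sum_add_distrib]; ring

theorem osum_comm (a b c d : ℤ) (g : ℤ → ℤ → ℤ) :
    osum a b (fun x => osum c d (g x)) = osum c d (fun y => osum a b (fun x => g x y)) := by
  simp only [osum, sum_sub_distrib]
  rw [sum_comm (s := Ico a b), sum_comm (s := Ico a b), sum_comm (s := Ico b a),
    sum_comm (s := Ico b a)]
  ring

theorem osum_comp_add_right (a b d : ℤ) (f : ℤ → ℤ) :
    osum a b (fun x => f (x + d)) = osum (a + d) (b + d) f := by
  simp only [osum, sum_Ico_add']

theorem osum_square {g : ℤ → ℤ → ℤ} (hg : ∀ x y, g y x = -g x y) (a b : ℤ) :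
    osum a b (fun x => osum a b (g x)) = 0 := by
  have hswap : ∀ y, osum a b (fun x => g x y) = -osum a b (g y) := fun y => by
    rw [← osum_neg]; exact congrArg _ (funext fun x => hg y x)
  have h := osum_comm a b a b g
  simp only [hswap, osum_neg] at h
  linarith

theorem ssum_eq_osum (a b : ℤ) (f : ℤ → ℤ) : ssum a b f = osum a (b + 1) f := by
  rw [ssum]
  split_ifs with h
  · rw [osum_of_le (by omega), Ico_add_one_right_eq_Icc]
  · rw [← neg_neg (osum a _ f), ← osum_swap, osum_of_le (by omega), Icc_sub_one_right_eq_Ico]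

theorem ssum_swap (a b : ℤ) (f : ℤ → ℤ) : ssum (b + 1) (a - 1) f = -ssum a b f := by
  rw [ssum_eq_osum, ssum_eq_osum, sub_add_cancel, osum_swap]

theorem ssum_add_ssum (a b c : ℤ) (f : ℤ → ℤ) : ssum a b f + ssum (b + 1) c f = ssum a c f := by
  simp only [ssum_eq_osum, osum_add_osum]

theorem ssum_neg (a b : ℤ) (f : ℤ → ℤ) : ssum a b (fun x => -f x) = -ssum a b f := by
  simp only [ssum_eq_osum, osum_neg]

theorem ssum_add (a b : ℤ) (f g : ℤ → ℤ) :
    ssum a b (fun x => f x + g x) = ssum a b f + ssum a b g := by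
  simp only [ssum_eq_osum, osum_add]

theorem ssum_shifted_square {E : ℤ → ℤ → ℤ} (hE : ∀ x y, E (y + 1) (x - 1) = -E x y) (a b : ℤ) :
    ssum (a + 1) (b + 1) (fun x => ssum a b (E x)) = 0 := by
  simp only [ssum_eq_osum]
  rw [← osum_comp_add_right]
  exact osum_square (fun x y => by simpa using hE (x + 1) y) a (b + 1)

theorem ssum_swap_ssum {E : ℤ → ℤ → ℤ} (hE : ∀ x y, E (y + 1) (x - 1) = -E x y) (a b c : ℤ) :
    ssum (b + 1) (a - 1) (fun x => ssum (a - 1) c (E x)) =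
      -ssum a b (fun x => ssum b c (E x)) := by
  have split : ∀ x, ssum (a - 1) c (E x) = ssum (a - 1) (b - 1) (E x) + ssum b c (E x) :=
    fun x => by rw [← ssum_add_ssum (a - 1) (b - 1) c, sub_add_cancel]
  have square : ssum a b (fun x => ssum (a - 1) (b - 1) (E x)) = 0 := by
    simpa using ssum_shifted_square hE (a - 1) (b - 1)
  simp only [split, ssum_add, ssum_swap, square, neg_zero, zero_add]

def swapAt {m : ℕ} (i : Fin m) (t : Fin (m + 1) → ℤ) : Fin (m + 1) → ℤ :=
  fun j => if j = i.castSucc then t i.succ + 1 else if j = i.succ then t i.castSucc - 1 else t j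

theorem swapAt_zero_cons_cons {m : ℕ} (x y : ℤ) (t : Fin m → ℤ) :
    swapAt 0 (Fin.cons x (Fin.cons y t) : Fin (m + 2) → ℤ) =
      Fin.cons (y + 1) (Fin.cons (x - 1) t) := by
  funext j
  refine Fin.cases ?_ (Fin.cases ?_ fun j => ?_) j <;> simp [swapAt, Fin.ext_iff]

theorem swapAt_succ_cons {m : ℕ} (i : Fin m) (x : ℤ) (t : Fin (m + 1) → ℤ) :
    swapAt i.succ (Fin.cons x t) = Fin.cons x (swapAt i t) := by
  funext j
  refine Fin.cases ?_ (fun j => ?_) j <;> simp [swapAt, Fin.ext_iff]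

def SwapAntisymm {m : ℕ} (f : (Fin (m + 1) → ℤ) → ℤ) : Prop :=
  ∀ (i : Fin m) (t : Fin (m + 1) → ℤ), f (swapAt i t) = -f t

namespace SwapAntisymm

variable {m : ℕ} {f : (Fin (m + 2) → ℤ) → ℤ}

theorem apply_cons_cons (hf : SwapAntisymm f) (x y : ℤ) (t : Fin m → ℤ) :
    f (Fin.cons (y + 1) (Fin.cons (x - 1) t)) = -f (Fin.cons x (Fin.cons y t)) := by
  rw [← swapAt_zero_cons_cons]
  exact hf 0 _

theorem comp_cons (hf : SwapAntisymm f) (x : ℤ) : SwapAntisymm fun t => f (Fin.cons x t) :=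
  fun i t => by simpa only [swapAt_succ_cons] using hf i.succ (Fin.cons x t)

end SwapAntisymm

noncomputable def chainSum (m : ℕ) (c : Fin (m + 1) → ℤ) (f : (Fin m → ℤ) → ℤ) : ℤ :=
  sbox m (fun j => c j.castSucc) (fun j => c j.succ) f

theorem chainSum_zero (c : Fin 1 → ℤ) (f : (Fin 0 → ℤ) → ℤ) : chainSum 0 c f = f Fin.elim0 :=
  rfl

theorem chainSum_cons (m : ℕ) (a : ℤ) (c : Fin (m + 1) → ℤ) (f : (Fin (m + 1) → ℤ) → ℤ) :
    chainSum (m + 1) (Fin.cons a c) f =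
      ssum a (c 0) fun x => chainSum m c fun t => f (Fin.cons x t) := by
  simp only [chainSum, sbox, Fin.castSucc_zero, Fin.succ_zero_eq_one, ← Fin.succ_castSucc]
  rfl

theorem chainSum_neg (m : ℕ) (c : Fin (m + 1) → ℤ) (f : (Fin m → ℤ) → ℤ) :
    chainSum m c (fun t => -f t) = -chainSum m c f := by
  induction m with
  | zero => rfl
  | succ m ih =>
    cases c using Fin.consCases with
    | cons a c => simp only [chainSum_cons, ih, ssum_neg]

theorem sgt_add_two (n : ℕ) : sgt (n + 2) = fun k => chainSum (n + 1) k (sgt (n + 1)) :=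
  rfl

section

variable {m : ℕ}

theorem chainSum_swapAt_zero {f : (Fin (m + 1) → ℤ) → ℤ} (hf : SwapAntisymm f)
    (c : Fin (m + 2) → ℤ) : chainSum (m + 1) (swapAt 0 c) f = -chainSum (m + 1) c f := by
  cases c using Fin.consCases with | cons a c =>
  cases c using Fin.consCases with | cons b d =>
  rw [swapAt_zero_cons_cons]
  cases m with
  | zero =>
    simp only [chainSum_cons, chainSum_zero, Fin.cons_zero]
    exact ssum_swap a b _
  | succ m =>
    simp only [chainSum_cons, Fin.cons_zero]
    exact ssum_swap_ssum (fun x y => by simp only [hf.apply_cons_cons, chainSum_neg]) a b (d 0)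

theorem ssum_chainSum_swapAt_apply_zero {f : (Fin (m + 2) → ℤ) → ℤ} (hf : SwapAntisymm f)
    (a : ℤ) (c : Fin (m + 2) → ℤ) (i : Fin (m + 1)) :
    ssum a (swapAt i c 0) (fun x => chainSum (m + 1) c fun t => f (Fin.cons x t)) =
      ssum a (c 0) (fun x => chainSum (m + 1) c fun t => f (Fin.cons x t)) := by
  cases c using Fin.consCases with | cons b c =>
  cases i using Fin.cases with
  | succ i => rw [swapAt_succ_cons, Fin.cons_zero, Fin.cons_zero]
  | zero =>
    cases c using Fin.consCases with | cons e d =>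
    have square : ssum (b + 1) (e + 1)
        (fun x => chainSum (m + 1) (Fin.cons b (Fin.cons e d)) fun t => f (Fin.cons x t)) = 0 := by
      simp only [chainSum_cons, Fin.cons_zero]
      exact ssum_shifted_square (fun x y => by simp only [hf.apply_cons_cons, chainSum_neg]) b e
    rw [swapAt_zero_cons_cons, Fin.cons_zero, Fin.cons_zero, ← ssum_add_ssum a b, square,
      add_zero]

theorem SwapAntisymm.chainSum {f : (Fin (m + 1) → ℤ) → ℤ} (hf : SwapAntisymm f) :
    SwapAntisymm fun c : Fin (m + 2) → ℤ => chainSum (m + 1) c f := by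
  induction m with
  | zero =>
    intro i c
    rw [Fin.fin_one_eq_zero i]
    exact chainSum_swapAt_zero hf c
  | succ m ih =>
    intro i c
    cases i using Fin.cases with
    | zero => exact chainSum_swapAt_zero hf c
    | succ i =>
      cases c using Fin.consCases with | cons a c =>
      simp only [swapAt_succ_cons, chainSum_cons, ih (hf.comp_cons _) i c, ssum_neg,
        ssum_chainSum_swapAt_apply_zero hf]

end

theorem sgt_swapAntisymm : ∀ n, SwapAntisymm (sgt (n + 1))
  | 0 => fun i => i.elim0
  | n + 1 => by
    rw [sgt_add_two]
    exact (sgt_swapAntisymm n).chainSum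

/-- For every `n ≥ 2` and `1 ≤ i ≤ n-1`,
`sgt (k_1,…,k_n) = -sgt (k_1,…,k_{i-1}, k_{i+1}+1, k_i-1, k_{i+2},…,k_n)`. -/
theorem sgt_swap (n : ℕ) (k : Fin (n + 2) → ℤ) (i : Fin (n + 1)) :
    sgt (n + 2) k =
      -sgt (n + 2) fun j =>
        if j = i.castSucc then k i.succ + 1
        else if j = i.succ then k i.castSucc - 1 else k j :=
  neg_eq_iff_eq_neg.mp (sgt_swapAntisymm (n + 1) i k).symm
end

section
/- For every n ≥ 1, every k = (k_1,…,k_n) ∈ ℤ^n, and every x ∈ ℤ, sgt(k_1,…,k_n) = Σ_{i=1}^{n} sgt(k_1,…,k_{i−1}, x+n−i, k_{i+1},…,k_n). -/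
open Finset Matrix

theorem ssum_sub_pred (F : ℤ → ℤ) (a b : ℤ) :
    ssum a b (fun t => F t - F (t - 1)) = F b - F (a - 1) := by
  have telescope : ∀ u v, u - 1 ≤ v → ∑ t ∈ Icc u v, (F t - F (t - 1)) = F v - F (u - 1) := by
    intro u v huv
    induction v, huv using Int.leInduction with
    | base => simp
    | succ v hv ih =>
      rw [← insert_Icc_right_eq_Icc_add_one (by omega), sum_insert (by simp), ih,
        add_sub_cancel_right]
      abel
  unfold ssum
  split_ifs
  · exact telescope a b (by omega)
  · rw [telescope (b + 1) (a - 1) (by omega), add_sub_cancel_right, neg_sub]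

theorem map_ssum {ι : Type*} (ψ : (ι → ℤ) →+ ℤ) (a b : ℤ) (g : ℤ → ι → ℤ) :
    ssum a b (fun t => ψ (g t)) = ψ fun j => ssum a b fun t => g t j := by
  unfold ssum
  split_ifs
  · simp [← Finset.sum_fn, map_sum]
  · rw [← map_sum, ← map_neg]
    congr 1
    ext j
    simp

theorem sbox_multilinearMap {ι : Type*} :
    ∀ (m : ℕ) (a b : Fin m → ℤ) (g : Fin m → ℤ → ι → ℤ)
      (φ : MultilinearMap ℤ (fun _ : Fin m => ι → ℤ) ℤ),
    sbox m a b (fun l => φ fun i => g i (l i)) = φ fun i j => ssum (a i) (b i) fun t => g i t j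
  | 0, _, _, _, φ => by
    rw [sbox]
    congr 1
    exact funext fun i => i.elim0
  | m + 1, a, b, g, φ => by
    have inner : ∀ l, sbox m (fun i => a i.succ) (fun i => b i.succ)
        (fun t => φ fun i => g i (Fin.cons l t i)) =
        φ (Fin.cons (g 0 l) fun i j => ssum (a i.succ) (b i.succ) fun t => g i.succ t j) := by
      intro l
      rw [← MultilinearMap.curryLeft_apply, ← sbox_multilinearMap m]
      congr 1
      ext t
      rw [MultilinearMap.curryLeft_apply]
      congr 1
      ext i
      refine Fin.cases ?_ (fun i => ?_) i <;> simp
    rw [sbox]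
    simp only [inner]
    refine (map_ssum (AddMonoidHom.mk' (fun v => φ (Fin.cons v _)) fun v w => φ.cons_add _ v w)
      (a 0) (b 0) (g 0)).trans (congrArg φ ?_)
    ext i
    refine Fin.cases ?_ (fun i => ?_) i <;> simp

theorem ssum_choose_add (a b c : ℤ) (j : ℕ) :
    ssum a b (fun t => Ring.choose (t + c) j) =
      Ring.choose (b + c + 1) (j + 1) - Ring.choose (a + c) (j + 1) := by
  have shift : ∀ t, t - 1 + c + 1 = t + c := fun t => by ring
  have pascal : ∀ t : ℤ, Ring.choose (t + c) j =
      Ring.choose (t + c + 1) (j + 1) - Ring.choose (t - 1 + c + 1) (j + 1) := fun t => by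
    rw [Ring.choose_succ_succ, shift, add_sub_cancel_right]
  simp only [pascal]
  rw [ssum_sub_pred (fun t => Ring.choose (t + c + 1) (j + 1)), shift]

theorem det_eq_det_succ_sub_castSucc {R : Type*} [CommRing R] {n : ℕ}
    (A : Matrix (Fin (n + 2)) (Fin (n + 2)) R) (hA : ∀ i, A i 0 = 1) :
    A.det = (of fun i j : Fin (n + 1) => A i.succ j.succ - A i.castSucc j.succ).det := by
  set B : Matrix (Fin (n + 2)) (Fin (n + 2)) R :=
    of (Fin.cons (A 0) fun i j => A i.succ j - A i.castSucc j)
  have hAB : A.det = B.det :=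
    det_eq_of_forall_row_eq_smul_add_pred 1 (fun j => by simp [B]) (fun i j => by simp [B])
  rw [hAB, det_succ_column_zero, Fin.sum_univ_succ, sum_eq_zero fun i _ => by simp [B, hA]]
  simp only [Fin.coe_ofNat_eq_mod, Nat.zero_mod, pow_zero, of_apply, Fin.cons_zero, hA, mul_one,
    Fin.succAbove_zero, one_mul, add_zero, B]
  rfl

theorem sum_det_updateRow_eq_dotProduct_cramer {n R : Type*} [Fintype n] [DecidableEq n]
    [CommRing R] (A : Matrix n n R) (r : n → R) :
    ∑ i, (A.updateRow i r).det = r ⬝ᵥ A.cramer 1 := by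
  simp_rw [← cramer_transpose_apply, cramer_eq_adjugate_mulVec, ← adjugate_transpose]
  rw [← one_dotProduct, dotProduct_mulVec, vecMul_transpose, dotProduct_comm]

theorem sum_det_updateRow_of_col_eq_one {n R : Type*} [Fintype n] [DecidableEq n]
    [CommRing R] (A : Matrix n n R) (r : n → R) (j₀ : n) (hA : ∀ i, A i j₀ = 1)
    (hr : r j₀ = 1) :
    ∑ i, (A.updateRow i r).det = A.det := by
  rw [sum_det_updateRow_eq_dotProduct_cramer, cramer_row_self A 1 j₀ fun i => (hA i).symm,
    dotProduct_single, hr, one_mul]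

def chooseMatrix {m : ℕ} (z : Fin m → ℤ) : Matrix (Fin m) (Fin m) ℤ :=
  of fun i j => Ring.choose (z i) j

theorem chooseMatrix_update {m : ℕ} (z : Fin m → ℤ) (i : Fin m) (c : ℤ) :
    chooseMatrix (Function.update z i c) =
      (chooseMatrix z).updateRow i fun j => Ring.choose c j := by
  ext i' j
  by_cases h : i' = i
  · subst h; simp [chooseMatrix]
  · simp [chooseMatrix, h]

theorem sgt_eq_det_chooseMatrix :
    ∀ (n : ℕ) (k : Fin (n + 1) → ℤ), sgt (n + 1) k = (chooseMatrix fun i => k i + i).det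
  | 0, k => by simp [sgt, chooseMatrix]
  | n + 1, k => by
    calc sgt (n + 2) k
        = sbox (n + 1) (fun i => k i.castSucc) (fun i => k i.succ)
            (fun l => detRowAlternating fun i j => Ring.choose (l i + i) (j : ℕ)) := by
          rw [sgt]
          congr 1
          exact funext fun l => sgt_eq_det_chooseMatrix n l
      _ = (of fun i j : Fin (n + 1) => ssum (k i.castSucc) (k i.succ)
            fun t => Ring.choose (t + i) (j : ℕ)).det :=
          sbox_multilinearMap _ _ _ (fun i t (j : Fin (n + 1)) => Ring.choose (t + i) (j : ℕ))
            detRowAlternating.toMultilinearMap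
      _ = (of fun i j : Fin (n + 1) => Ring.choose (k i.succ + i.succ) (j.succ : ℕ) -
            Ring.choose (k i.castSucc + i.castSucc) (j.succ : ℕ)).det := by
          congr 1
          ext i j
          simp [ssum_choose_add, add_assoc]
      _ = (chooseMatrix fun i => k i + i).det :=
          (det_eq_det_succ_sub_castSucc (chooseMatrix fun i => k i + i)
            fun i => Ring.choose_zero_right _).symm

/-- For every `n ≥ 1`, `k ∈ ℤ^n` and `x ∈ ℤ`,
`sgt (k_1,…,k_n) = Σ_{i=1}^{n} sgt (k_1,…,k_{i-1}, x+n-i, k_{i+1},…,k_n)`. -/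
theorem sgt_insert (n : ℕ) (k : Fin (n + 1) → ℤ) (x : ℤ) :
    sgt (n + 1) k =
      ∑ i : Fin (n + 1), sgt (n + 1) (Function.update k i (x + (n : ℤ) - (i.1 : ℤ))) := by
  have insert_row : ∀ i : Fin (n + 1),
      (fun j => Function.update k i (x + n - i) j + j) =
        Function.update (fun j => k j + j) i (x + n) := by
    intro i
    ext j
    by_cases h : j = i
    · subst h; simp
    · simp [h]
  simp only [sgt_eq_det_chooseMatrix, insert_row, chooseMatrix_update]
  exact (sum_det_updateRow_of_col_eq_one _ _ 0 (fun i => Ring.choose_zero_right _)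
    (Ring.choose_zero_right _)).symm
end

section
/- Let n ≥ 2, let a = (a_1,…,a_{n−1}), b = (b_1,…,b_{n−1}) ∈ ℤ^{n−1} and x ∈ ℤ. Then ∏_{i=1}^{n−1} (b_i − a_i + 1) = Σ_{ε ∈ {0,1}^{n−1}} (−1)^{ε_1+⋯+ε_{n−1}} · (∏_{i=1}^{n−2} (m_{i+1} − m_i + 1)) · (x − m_{n−1} + 1), where m_i = a_i if ε_i = 0 and m_i = b_i + 1 if ε_i = 1 (this is an identity of integers, valid for all choices of a, b, x). -/
/-!
Summing over the choice at the first coordinate only affects the first factor `m₂ - m₁ + 1`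
(or `x - m₁ + 1` when there is a single coordinate), and for every `y` the signed sum of
`y - m₁ + 1` over `m₁ ∈ {a₁, b₁ + 1}` is `b₁ - a₁ + 1`. So the first coordinate splits off as the
factor `b₁ - a₁ + 1` of both sides, and induction on the number of coordinates finishes.
-/

open Finset

namespace SignedBox

variable {R : Type*} [CommRing R]

def corner (a b : R) (c : Bool) : R := if c then b + 1 else a

def corners {n : ℕ} (a b : Fin n → R) (ε : Fin n → Bool) : Fin n → R :=
  fun i => corner (a i) (b i) (ε i)

def chainBoxSize {n : ℕ} (m : Fin (n + 1) → R) (x : R) : R :=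
  (∏ i : Fin n, (m i.succ - m i.castSucc + 1)) * (x - m (Fin.last n) + 1)

lemma corners_cons {n : ℕ} (a b : Fin (n + 1) → R) (c : Bool) (ε : Fin n → Bool) :
    corners a b (Fin.cons c ε) =
      Fin.cons (corner (a 0) (b 0) c) (corners (Fin.tail a) (Fin.tail b) ε) := by
  ext i
  cases i using Fin.cases <;> rfl

lemma chainBoxSize_fin_one (m : Fin 1 → R) (x : R) : chainBoxSize m x = x - m 0 + 1 := by
  simp [chainBoxSize]

lemma chainBoxSize_cons {n : ℕ} (y : R) (m : Fin (n + 1) → R) (x : R) :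
    chainBoxSize (Fin.cons y m) x = (m 0 - y + 1) * chainBoxSize m x := by
  simp only [chainBoxSize, Fin.prod_univ_succ, Fin.cons_succ, Fin.castSucc_zero, Fin.cons_zero,
    ← Fin.succ_last, mul_assoc]
  rfl

lemma sum_bool_neg_one_pow_mul_sub_corner (a b y : R) :
    ∑ c : Bool, (-1 : R) ^ (if c then 1 else 0) * (y - corner a b c + 1) = b - a + 1 := by
  simp only [corner, Fintype.sum_bool, Bool.false_eq_true, if_true, if_false, pow_one, pow_zero]
  ring

lemma card_filter_cons_eq_true {n : ℕ} (c : Bool) (ε : Fin n → Bool) :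
    #{i | (Fin.cons c ε : Fin (n + 1) → Bool) i = true} =
      (if c then 1 else 0) + #{i | ε i = true} := by
  simp [Fin.card_filter_univ_succ']

lemma sum_neg_one_pow_card_mul_eq_sum_cons {n : ℕ} (f : (Fin (n + 1) → Bool) → R) :
    ∑ ε, (-1 : R) ^ #{i | ε i = true} * f ε =
      ∑ ε : Fin n → Bool, (-1 : R) ^ #{i | ε i = true} *
        ∑ c : Bool, (-1 : R) ^ (if c then 1 else 0) * f (Fin.cons c ε) := by
  rw [← Fintype.sum_equiv (Fin.consEquiv fun _ => Bool)
    (fun p => (-1 : R) ^ #{i | (Fin.cons p.1 p.2 : Fin (n + 1) → Bool) i = true} *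
      f (Fin.cons p.1 p.2)) _ fun _ => rfl, Fintype.sum_prod_type, sum_comm]
  simp only [card_filter_cons_eq_true, pow_add, mul_sum, mul_assoc, mul_left_comm]

theorem prod_sub_add_one_eq_sum_corners (n : ℕ) (a b : Fin (n + 1) → R) (x : R) :
    ∏ i, (b i - a i + 1) =
      ∑ ε, (-1 : R) ^ #{i | ε i = true} * chainBoxSize (corners a b ε) x := by
  induction n with
  | zero =>
    simp only [sum_neg_one_pow_card_mul_eq_sum_cons, corners_cons, chainBoxSize_fin_one,
      Fin.cons_zero, sum_bool_neg_one_pow_mul_sub_corner]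
    simp
  | succ n ih =>
    rw [sum_neg_one_pow_card_mul_eq_sum_cons]
    simp only [corners_cons, chainBoxSize_cons, ← mul_assoc, ← sum_mul,
      sum_bool_neg_one_pow_mul_sub_corner]
    calc ∏ i, (b i - a i + 1)
        = (b 0 - a 0 + 1) * ∏ i, (Fin.tail b i - Fin.tail a i + 1) := Fin.prod_univ_succ _
      _ = _ := by
        rw [ih, mul_sum]
        exact sum_congr rfl fun ε _ => by ring

end SignedBox

/-- The signed-size identity underlying the sijection of Problem 2: for `n ≥ 2`,
`a, b ∈ ℤ^{n-1}` and `x ∈ ℤ`, the size `∏_i (b_i - a_i + 1)` of the signed box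
`[a_1,b_1] × ⋯ × [a_{n-1},b_{n-1}]` equals the signed sum over the `2^{n-1}` corner
choices `m` (with `m_i = a_i` or `m_i = b_i + 1`) of the size of the box
`[m_1,m_2] × ⋯ × [m_{n-2},m_{n-1}] × [m_{n-1},x]`. -/
theorem signed_box_corners (n : ℕ) (a b : Fin (n + 1) → ℤ) (x : ℤ) :
    (∏ i : Fin (n + 1), (b i - a i + 1)) =
      ∑ ε : Fin (n + 1) → Bool,
        (-1 : ℤ) ^ (Finset.univ.filter fun i => ε i = true).card *
          ((∏ i : Fin n,
            ((if ε i.succ then b i.succ + 1 else a i.succ) -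
              (if ε i.castSucc then b i.castSucc + 1 else a i.castSucc) + 1)) *
          (x - (if ε (Fin.last n) then b (Fin.last n) + 1 else a (Fin.last n)) + 1)) :=
  SignedBox.prod_sub_add_one_eq_sum_corners n a b x
end

section
/- Let n ≥ 1, k = (k_1,…,k_n) ∈ ℤ^n and x ∈ ℤ. Then ∏_{i=1}^{n−1} (k_{i+1} − k_i + 1) = Σ_{i=1}^{n} (∏_{j=1}^{i−2} (k_{j+1} − k_j + 1)) · A_i · B_i · (∏_{j=i+1}^{n−1} (k_{j+1} − k_j + 1)) + Σ_{i=1}^{n−2} (∏_{j=1}^{i−1} (k_{j+1} − k_j + 1)) · (x + n − i − 1 − k_{i+1})^2 · (∏_{j=i+2}^{n−1} (k_{j+1} − k_j + 1)), where A_i = x + n − i − k_{i−1} + 1 for 2 ≤ i ≤ n and A_1 = 1, and B_i = k_{i+1} − (x + n − i) + 1 for 1 ≤ i ≤ n−1 and B_n = 1 (an identity of integers valid for all k and x; empty products equal 1). -/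
open Finset

private lemma signed_box_core (k v : ℕ → ℤ)
    (hb : ∀ j : ℕ, k (j + 2) - k (j + 1) + 1 = v j - v (j + 1)) :
    ∀ m : ℕ, (∏ i ∈ Icc 1 (m + 1), (k (i + 1) - k i + 1)) =
      (-v 1) * (∏ i ∈ Icc 2 (m + 1), (k (i + 1) - k i + 1))
      + (∑ j ∈ range m, (∏ i ∈ Icc 1 j, (k (i + 1) - k i + 1)) *
          ((v (j + 1)) ^ 2 - v j * v (j + 2)) *
          (∏ i ∈ Icc (j + 3) (m + 1), (k (i + 1) - k i + 1)))
      + (∏ i ∈ Icc 1 m, (k (i + 1) - k i + 1)) * v m := by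
  intro m
  induction m with
  | zero =>
      have h1 : Icc 1 0 = (∅ : Finset ℕ) := by decide
      have h2 : Icc 2 1 = (∅ : Finset ℕ) := by decide
      simp only [range_zero, sum_empty, Icc_self, prod_singleton, h1, h2, prod_empty,
        add_zero, mul_one, one_mul, zero_add]
      linarith [hb 0]
  | succ m ih =>
      show (∏ i ∈ Icc 1 (m + 2), (k (i + 1) - k i + 1)) =
        (-v 1) * (∏ i ∈ Icc 2 (m + 2), (k (i + 1) - k i + 1))
        + (∑ j ∈ range (m + 1), (∏ i ∈ Icc 1 j, (k (i + 1) - k i + 1)) *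
            ((v (j + 1)) ^ 2 - v j * v (j + 2)) *
            (∏ i ∈ Icc (j + 3) (m + 2), (k (i + 1) - k i + 1)))
        + (∏ i ∈ Icc 1 (m + 1), (k (i + 1) - k i + 1)) * v (m + 1)
      have hP : (∏ i ∈ Icc 1 (m + 2), (k (i + 1) - k i + 1))
          = (∏ i ∈ Icc 1 (m + 1), (k (i + 1) - k i + 1)) * (k (m + 3) - k (m + 2) + 1) :=
        Finset.prod_Icc_succ_top (by omega) _
      have hS : (∏ i ∈ Icc 2 (m + 2), (k (i + 1) - k i + 1))
          = (∏ i ∈ Icc 2 (m + 1), (k (i + 1) - k i + 1)) * (k (m + 3) - k (m + 2) + 1) :=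
        Finset.prod_Icc_succ_top (by omega) _
      have hQ : (∏ i ∈ Icc 1 (m + 1), (k (i + 1) - k i + 1))
          = (∏ i ∈ Icc 1 m, (k (i + 1) - k i + 1)) * (k (m + 2) - k (m + 1) + 1) :=
        Finset.prod_Icc_succ_top (by omega) _
      have hsum : (∑ j ∈ range (m + 1), (∏ i ∈ Icc 1 j, (k (i + 1) - k i + 1)) *
            ((v (j + 1)) ^ 2 - v j * v (j + 2)) *
            (∏ i ∈ Icc (j + 3) (m + 2), (k (i + 1) - k i + 1)))
          = (∑ j ∈ range m, (∏ i ∈ Icc 1 j, (k (i + 1) - k i + 1)) *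
              ((v (j + 1)) ^ 2 - v j * v (j + 2)) *
              (∏ i ∈ Icc (j + 3) (m + 1), (k (i + 1) - k i + 1)))
            * (k (m + 3) - k (m + 2) + 1)
            + (∏ i ∈ Icc 1 m, (k (i + 1) - k i + 1)) *
              ((v (m + 1)) ^ 2 - v m * v (m + 2)) := by
        rw [Finset.sum_range_succ, Finset.sum_mul]
        congr 1
        · apply Finset.sum_congr rfl
          intro j hj
          have hj' : j < m := Finset.mem_range.mp hj
          have h : (∏ i ∈ Icc (j + 3) (m + 2), (k (i + 1) - k i + 1))
              = (∏ i ∈ Icc (j + 3) (m + 1), (k (i + 1) - k i + 1)) *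
                (k (m + 3) - k (m + 2) + 1) :=
            Finset.prod_Icc_succ_top (by omega) _
          rw [h]; ring
        · have h : Icc (m + 3) (m + 2) = (∅ : Finset ℕ) := Finset.Icc_eq_empty (by omega)
          rw [h]
          simp only [prod_empty, mul_one]
      have hbm := hb m
      have hbm1 : k (m + 3) - k (m + 2) + 1 = v (m + 1) - v (m + 2) := hb (m + 1)
      rw [hP, hS, hsum]
      linear_combination (k (m + 3) - k (m + 2) + 1) * ih - v (m + 1) * hQ
        - (∏ i ∈ Icc 1 m, (k (i + 1) - k i + 1)) * v (m + 1) * hbm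
        + (∏ i ∈ Icc 1 m, (k (i + 1) - k i + 1)) * v m * hbm1

/-- The signed-size identity underlying the sijection of Problem 3 (with `1`-based
indexing, `k = (k 1, …, k n)`): the size of the signed box `[k_1,k_2] × ⋯ × [k_{n-1},k_n]`
is decomposed according to inserting the value `x + n - i` at position `i`. -/
theorem signed_box_insertion (n : ℕ) (hn : 1 ≤ n) (k : ℕ → ℤ) (x : ℤ) :
    (∏ i ∈ Finset.Icc 1 (n - 1), (k (i + 1) - k i + 1)) =
      (∑ i ∈ Finset.Icc 1 n,
        (∏ j ∈ Finset.Icc 1 (i - 2), (k (j + 1) - k j + 1)) *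
          (if 2 ≤ i then x + (n : ℤ) - (i : ℤ) - k (i - 1) + 1 else 1) *
          (if i ≤ n - 1 then k (i + 1) - (x + (n : ℤ) - (i : ℤ)) + 1 else 1) *
          (∏ j ∈ Finset.Icc (i + 1) (n - 1), (k (j + 1) - k j + 1))) +
      ∑ i ∈ Finset.Icc 1 (n - 2),
        (∏ j ∈ Finset.Icc 1 (i - 1), (k (j + 1) - k j + 1)) *
          (x + (n : ℤ) - (i : ℤ) - 1 - k (i + 1)) ^ 2 *
          (∏ j ∈ Finset.Icc (i + 2) (n - 1), (k (j + 1) - k j + 1)) := by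
  match n, hn with
  | 1, _ =>
      norm_num
  | (m + 2), _ =>
      set f : ℕ → ℤ := fun i =>
        (∏ j ∈ Finset.Icc 1 (i - 2), (k (j + 1) - k j + 1)) *
          (if 2 ≤ i then x + ((m + 2 : ℕ) : ℤ) - (i : ℤ) - k (i - 1) + 1 else 1) *
          (if i ≤ (m + 2) - 1 then k (i + 1) - (x + ((m + 2 : ℕ) : ℤ) - (i : ℤ)) + 1 else 1) *
          (∏ j ∈ Finset.Icc (i + 1) ((m + 2) - 1), (k (j + 1) - k j + 1)) with hf
      set g : ℕ → ℤ := fun i =>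
        (∏ j ∈ Finset.Icc 1 (i - 1), (k (j + 1) - k j + 1)) *
          (x + ((m + 2 : ℕ) : ℤ) - (i : ℤ) - 1 - k (i + 1)) ^ 2 *
          (∏ j ∈ Finset.Icc (i + 2) ((m + 2) - 1), (k (j + 1) - k j + 1)) with hg
      set v : ℕ → ℤ := fun j => x + (m : ℤ) + 1 - (j : ℤ) - k (j + 1) with hv
      have hb : ∀ j : ℕ, k (j + 2) - k (j + 1) + 1 = v j - v (j + 1) := by
        intro j
        simp only [hv]
        push_cast
        ring
      have core := signed_box_core k v hb m
      have e1 : (m + 2) - 1 = m + 1 := rfl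
      have e2 : (m + 2) - 2 = m := rfl
      rw [e1, e2]
      have hsum1 : (∑ i ∈ Finset.Icc 1 (m + 2), f i)
          = (∑ i ∈ Finset.Icc 1 (m + 1), f i) + f (m + 2) :=
        Finset.sum_Icc_succ_top (by omega) _
      have hins : Finset.Icc 1 (m + 1) = insert 1 (Finset.Icc 2 (m + 1)) := by
        ext z
        simp only [Finset.mem_Icc, Finset.mem_insert]
        omega
      have hsum2 : (∑ i ∈ Finset.Icc 1 (m + 1), f i)
          = f 1 + ∑ i ∈ Finset.Icc 2 (m + 1), f i := by
        rw [hins, Finset.sum_insert (by simp)]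
      have hsum3 : (∑ i ∈ Finset.Icc 2 (m + 1), f i) = ∑ j ∈ Finset.range m, f (j + 2) := by
        rw [← Finset.Ico_add_one_right_eq_Icc, Finset.sum_Ico_eq_sum_range]
        apply Finset.sum_congr rfl
        intro j _
        rw [Nat.add_comm 2 j]
      have hsum4 : (∑ i ∈ Finset.Icc 1 m, g i) = ∑ j ∈ Finset.range m, g (j + 1) := by
        rw [← Finset.Ico_add_one_right_eq_Icc, Finset.sum_Ico_eq_sum_range]
        apply Finset.sum_congr rfl
        intro j _
        rw [Nat.add_comm 1 j]
      rw [hsum1, hsum2, hsum3, hsum4, core]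
      have hf1 : f 1 = (-v 1) * (∏ i ∈ Icc 2 (m + 1), (k (i + 1) - k i + 1)) := by
        simp only [hf, hv]
        rw [if_neg (by omega), if_pos (by omega)]
        have : Finset.Icc 1 (1 - 2) = (∅ : Finset ℕ) := by decide
        rw [this]
        simp only [Finset.prod_empty]
        push_cast
        ring
      have hfm : f (m + 2) = (∏ i ∈ Icc 1 m, (k (i + 1) - k i + 1)) * v m := by
        simp only [hf, hv]
        rw [if_pos (by omega), if_neg (by omega)]
        have : Finset.Icc (m + 2 + 1) ((m + 2) - 1) = (∅ : Finset ℕ) :=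
          Finset.Icc_eq_empty (by omega)
        rw [this]
        simp only [Finset.prod_empty, show (m + 2) - 2 = m from rfl,
          show (m + 2) - 1 = m + 1 from rfl]
        push_cast
        ring
      have hptw : ∀ j ∈ Finset.range m,
          (∏ i ∈ Icc 1 j, (k (i + 1) - k i + 1)) *
            ((v (j + 1)) ^ 2 - v j * v (j + 2)) *
            (∏ i ∈ Icc (j + 3) (m + 1), (k (i + 1) - k i + 1))
          = f (j + 2) + g (j + 1) := by
        intro j hj
        have hj' : j < m := Finset.mem_range.mp hj
        simp only [hf, hg, hv]
        rw [if_pos (by omega), if_pos (by omega)]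
        simp only [show j + 2 - 2 = j from rfl, show j + 2 - 1 = j + 1 from rfl,
          show j + 1 - 1 = j from rfl, show j + 2 + 1 = j + 3 from rfl,
          show j + 1 + 2 = j + 3 from rfl, show j + 1 + 1 = j + 2 from rfl,
          show (m + 2) - 1 = m + 1 from rfl]
        push_cast
        ring
      rw [Finset.sum_congr rfl hptw, Finset.sum_add_distrib, hf1, hfm]
      ring
end

section
/- Let S⁺, S⁻, T⁺, T⁻, U⁺, U⁻ be finite types. If there exists a bijection S⁺ ⊕ T⁻ ≃ S⁻ ⊕ T⁺ and a bijection T⁺ ⊕ U⁻ ≃ T⁻ ⊕ U⁺, then there exists a bijection S⁺ ⊕ U⁻ ≃ S⁻ ⊕ U⁺. (Garsia–Milne involution principle / composition of sijections: the bijection can be obtained by iterating the two given bijections, starting from an element of S⁺ ⊕ U⁻, until the orbit lands in S⁻ ⊕ U⁺.) -/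
/-- The Garsia–Milne involution principle / composition of sijections: a sijection
from `S` to `T` and a sijection from `T` to `U` yield a sijection from `S` to `U`. -/
theorem sijection_composition (Sp Sm Tp Tm Up Um : Type)
    [Fintype Sp] [Fintype Sm] [Fintype Tp] [Fintype Tm] [Fintype Up] [Fintype Um]
    (φ : Sp ⊕ Tm ≃ Sm ⊕ Tp) (ψ : Tp ⊕ Um ≃ Tm ⊕ Up) :
    Nonempty (Sp ⊕ Um ≃ Sm ⊕ Up) := by
  rw [← Fintype.card_eq]
  have h1 := Fintype.card_congr φ
  have h2 := Fintype.card_congr ψ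
  simp only [Fintype.card_sum] at *
  omega
end

section
/- Let S_1⁺, S_1⁻, S_2⁺, S_2⁻, T_1⁺, T_1⁻, T_2⁺, T_2⁻ be finite types. If there exist bijections S_1⁺ ⊕ T_1⁻ ≃ S_1⁻ ⊕ T_1⁺ and S_2⁺ ⊕ T_2⁻ ≃ S_2⁻ ⊕ T_2⁺, then there exists a bijection ((S_1⁺ × S_2⁺) ⊕ (S_1⁻ × S_2⁻)) ⊕ ((T_1⁺ × T_2⁻) ⊕ (T_1⁻ × T_2⁺)) ≃ ((S_1⁺ × S_2⁻) ⊕ (S_1⁻ × S_2⁺)) ⊕ ((T_1⁺ × T_2⁺) ⊕ (T_1⁻ × T_2⁻)). (Cartesian product of sijections: a sijection S_1 ⇒ T_1 and a sijection S_2 ⇒ T_2 yield a sijection S_1 × S_2 ⇒ T_1 × T_2.) -/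
/-- Cartesian product of sijections: a sijection `S₁ ⇒ T₁` and a sijection `S₂ ⇒ T₂`
yield a sijection `S₁ × S₂ ⇒ T₁ × T₂`. -/
theorem sijection_product (S1p S1m S2p S2m T1p T1m T2p T2m : Type)
    [Fintype S1p] [Fintype S1m] [Fintype S2p] [Fintype S2m]
    [Fintype T1p] [Fintype T1m] [Fintype T2p] [Fintype T2m]
    (φ : S1p ⊕ T1m ≃ S1m ⊕ T1p) (ψ : S2p ⊕ T2m ≃ S2m ⊕ T2p) :
    Nonempty (((S1p × S2p) ⊕ (S1m × S2m)) ⊕ ((T1p × T2m) ⊕ (T1m × T2p)) ≃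
      ((S1p × S2m) ⊕ (S1m × S2p)) ⊕ ((T1p × T2p) ⊕ (T1m × T2m))) := by
  have h1 := Fintype.card_congr φ
  have h2 := Fintype.card_congr ψ
  simp only [Fintype.card_sum] at h1 h2
  refine ⟨Fintype.equivOfCardEq ?_⟩
  simp only [Fintype.card_sum, Fintype.card_prod]
  set a1 := Fintype.card S1p
  set b1 := Fintype.card S1m
  set a2 := Fintype.card S2p
  set b2 := Fintype.card S2m
  set c1 := Fintype.card T1p
  set d1 := Fintype.card T1m
  set c2 := Fintype.card T2p
  set d2 := Fintype.card T2m
  have h1' : (a1 : ℤ) - b1 = c1 - d1 := by omega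
  have h2' : (a2 : ℤ) - b2 = c2 - d2 := by omega
  have : (a1 * a2 + b1 * b2 + (c1 * d2 + d1 * c2) : ℤ) =
      a1 * b2 + b1 * a2 + (c1 * c2 + d1 * d2) := by
    linear_combination ((a2 : ℤ) - b2) * h1' + ((c1 : ℤ) - d1) * h2'
  exact_mod_cast this
end

section
/- For every n ≥ 1 and every k = (k_1,…,k_n) ∈ ℤ^n, sgt(k) = Σ_A (−1)^{m(A)}, where the sum is over all triangular arrays A = (A_{i,j})_{1 ≤ j ≤ i ≤ n} of integers with bottom row A_{n,i} = k_i for 1 ≤ i ≤ n such that for all 1 ≤ j ≤ i < n either A_{i+1,j} ≤ A_{i,j} ≤ A_{i+1,j+1} or A_{i+1,j} > A_{i,j} > A_{i+1,j+1}, and m(A) is the number of pairs (i,j) with 1 ≤ j < i ≤ n and A_{i,j} > A_{i,j+1}. (This is a finite sum, since all entries of such an array lie between the minimum and the maximum of k.) -/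
/-- A triangular array of integers `(T_{i,j})_{1 ≤ j ≤ i ≤ n}` (0-indexed: row `i` has
`i+1` entries). -/
abbrev TriArray (n : ℕ) := (i : Fin n) → Fin (i.1 + 1) → ℤ

/-- The bottom row of the triangular array `T` is `k`. -/
def BottomRow {n : ℕ} (T : TriArray n) (k : Fin n → ℤ) : Prop :=
  ∀ (i : Fin n) (h : i.1 + 1 = n) (j : Fin (i.1 + 1)), T i j = k (Fin.cast h j)

/-- `T` is a (classical) monotone triangle with bottom row `k`: entries increase weakly
along both diagonals and strictly along rows. -/
def IsMT {n : ℕ} (T : TriArray n) (k : Fin n → ℤ) : Prop :=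
  BottomRow T k ∧
  (∀ (i : Fin n) (h : i.1 + 1 < n) (j : Fin (i.1 + 1)),
    T ⟨i.1 + 1, h⟩ j.castSucc ≤ T i j ∧ T i j ≤ T ⟨i.1 + 1, h⟩ j.succ) ∧
  (∀ (i : Fin n) (j : Fin i.1), T i j.castSucc < T i j.succ)

/-- The sequence `l = (l_1,…,l_m)` interlaces `k = (k_1,…,k_{m+1})`, written `l ≺ k`. -/
def Interlaces {m : ℕ} (l : Fin m → ℤ) (k : Fin (m + 1) → ℤ) : Prop :=
  -- (1) each `l_i` lies in the closed interval between `k_i` and `k_{i+1}`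
  (∀ i : Fin m, min (k i.castSucc) (k i.succ) ≤ l i ∧ l i ≤ max (k i.castSucc) (k i.succ)) ∧
  -- (2) if `k_{i-1} ≤ k_i ≤ k_{i+1}`, then `l_{i-1}` and `l_i` are not both `k_i`
  (∀ (j : Fin m) (h : j.1 + 1 < m),
    k j.castSucc ≤ k j.succ → k j.succ ≤ k ⟨j.1 + 2, Nat.succ_lt_succ h⟩ →
      ¬(l j = k j.succ ∧ l ⟨j.1 + 1, h⟩ = k j.succ)) ∧
  -- (3) if `k_i > l_i = k_{i+1}`, then `i ≤ n-2` and `l_{i+1} = l_i`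
  (∀ i : Fin m, k i.castSucc > l i → l i = k i.succ →
      ∃ h : i.1 + 1 < m, l ⟨i.1 + 1, h⟩ = l i) ∧
  -- (4) if `k_i = l_i > k_{i+1}`, then `i ≥ 2` and `l_{i-1} = l_i`
  (∀ i : Fin m, k i.castSucc = l i → l i > k i.succ →
      0 < i.1 ∧ l ⟨i.1 - 1, Nat.lt_of_le_of_lt (Nat.sub_le _ _) i.isLt⟩ = l i)

/-- `T` is a generalized monotone triangle with bottom row `k`: each row interlaces the
next one, and the bottom row is `k`. -/
def IsGMT {n : ℕ} (T : TriArray n) (k : Fin n → ℤ) : Prop :=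
  BottomRow T k ∧
  ∀ (i : Fin n) (h : i.1 + 1 < n), Interlaces (T i) (T ⟨i.1 + 1, h⟩)

/-- The number of strict descents in the rows of `T`, i.e. the number of pairs `(i,j)`
with `T_{i,j} > T_{i,j+1}`. -/
def rowDescents {n : ℕ} (T : TriArray n) : ℕ :=
  ∑ i : Fin n, (Finset.univ.filter fun j : Fin i.1 => T i j.succ < T i j.castSucc).card

/-- The number of `(i,j)` with `T_{i,j} > T_{i-1,j} = T_{i,j+1} = T_{i-1,j+1} > T_{i,j+2}`. -/
def specialCount {n : ℕ} (T : TriArray n) : ℕ :=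
  ∑ i : Fin n,
    (Finset.univ.filter fun j : Fin (i.1 - 1) =>
      T i ⟨j.1, by have := j.isLt; omega⟩ >
          T ⟨i.1 - 1, Nat.lt_of_le_of_lt (Nat.sub_le _ _) i.isLt⟩ j.castSucc ∧
      T ⟨i.1 - 1, Nat.lt_of_le_of_lt (Nat.sub_le _ _) i.isLt⟩ j.castSucc =
          T i ⟨j.1 + 1, by have := j.isLt; omega⟩ ∧
      T i ⟨j.1 + 1, by have := j.isLt; omega⟩ =
          T ⟨i.1 - 1, Nat.lt_of_le_of_lt (Nat.sub_le _ _) i.isLt⟩ j.succ ∧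
      T ⟨i.1 - 1, Nat.lt_of_le_of_lt (Nat.sub_le _ _) i.isLt⟩ j.succ >
          T i ⟨j.1 + 2, by have := j.isLt; omega⟩).card

/-- The sign of a generalized monotone triangle. -/
def gmtSign {n : ℕ} (T : TriArray n) : ℤ :=
  (-1) ^ (rowDescents T + specialCount T)

/-- The signed enumeration of generalized monotone triangles with bottom row `k`
(a finite sum, since all entries of such a triangle lie between the minimum and the
maximum of `k`). -/
noncomputable def smt {n : ℕ} (k : Fin n → ℤ) : ℤ :=
  ∑ᶠ T ∈ {T : TriArray n | IsGMT T k}, gmtSign T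

/-- A (generalized) Gelfand–Tsetlin pattern with bottom row `k`: a triangular array such
that each entry is between its two lower neighbours, either weakly increasing or strictly
decreasing, i.e. `A_{i+1,j} ≤ A_{i,j} ≤ A_{i+1,j+1}` or `A_{i+1,j} > A_{i,j} > A_{i+1,j+1}`. -/
def IsGTPattern {n : ℕ} (A : TriArray n) (k : Fin n → ℤ) : Prop :=
  BottomRow A k ∧
  ∀ (i : Fin n) (h : i.1 + 1 < n) (j : Fin (i.1 + 1)),
    (A ⟨i.1 + 1, h⟩ j.castSucc ≤ A i j ∧ A i j ≤ A ⟨i.1 + 1, h⟩ j.succ) ∨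
    (A ⟨i.1 + 1, h⟩ j.castSucc > A i j ∧ A i j > A ⟨i.1 + 1, h⟩ j.succ)


open Finset

noncomputable def ssumRange (a b : ℤ) : Finset ℤ :=
  if a ≤ b then Icc a b else Icc (b + 1) (a - 1)

def ssumSign (a b : ℤ) : ℤ := if a ≤ b then 1 else -1

lemma mem_ssumRange {a b x : ℤ} : x ∈ ssumRange a b ↔ (a ≤ x ∧ x ≤ b) ∨ (a > x ∧ x > b) := by
  unfold ssumRange
  split_ifs <;> simp only [mem_Icc] <;> omega

lemma ssum_eq_sign_mul_sum (a b : ℤ) (f : ℤ → ℤ) :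
    ssum a b f = ssumSign a b * ∑ l ∈ ssumRange a b, f l := by
  unfold ssum ssumSign ssumRange
  split_ifs <;> ring

noncomputable def sboxRange {m : ℕ} (a b : Fin m → ℤ) : Finset (Fin m → ℤ) :=
  Fintype.piFinset fun i => ssumRange (a i) (b i)

lemma sum_piFinset_fin_succ {α M : Type*} [AddCommMonoid M] {m : ℕ} (t : Fin (m + 1) → Finset α)
    (f : (Fin (m + 1) → α) → M) :
    ∑ x ∈ Fintype.piFinset t, f x =
      ∑ l ∈ t 0, ∑ y ∈ Fintype.piFinset (fun i => t i.succ), f (Fin.cons l y) := by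
  have h := filter_piFinset_eq_map_consEquiv t (fun _ => True)
  simp only [filter_true] at h
  rw [h, sum_map, sum_product]
  rfl

lemma sbox_eq_prod_sign_mul_sum (m : ℕ) (a b : Fin m → ℤ) (f : (Fin m → ℤ) → ℤ) :
    sbox m a b f = (∏ i, ssumSign (a i) (b i)) * ∑ x ∈ sboxRange a b, f x := by
  induction m with
  | zero =>
    have : sboxRange a b = {Fin.elim0} := by
      ext x
      simp only [sboxRange, Fintype.mem_piFinset, IsEmpty.forall_iff, true_iff, mem_singleton]
      exact Subsingleton.elim _ _
    simp [sbox, this]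
  | succ m ih =>
    rw [sbox, ssum_eq_sign_mul_sum]
    simp only [ih, sboxRange, sum_piFinset_fin_succ (fun i => ssumRange (a i) (b i)) f,
      Fin.prod_univ_succ, ← mul_sum]
    ring

def descents {n : ℕ} (k : Fin (n + 1) → ℤ) : ℕ :=
  #{j : Fin n | k j.succ < k j.castSucc}

lemma prod_ssumSign_eq_neg_one_pow_descents {n : ℕ} (k : Fin (n + 1) → ℤ) :
    ∏ i : Fin n, ssumSign (k i.castSucc) (k i.succ) = (-1) ^ descents k := by
  rw [descents, ← prod_const, prod_filter]
  refine prod_congr rfl fun i _ => ?_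
  unfold ssumSign
  split_ifs <;> first | rfl | omega

lemma sgt_succ_succ {n : ℕ} (k : Fin (n + 2) → ℤ) :
    sgt (n + 2) k = (-1) ^ descents k *
      ∑ l ∈ sboxRange (fun i => k i.castSucc) (fun i => k i.succ), sgt (n + 1) l := by
  rw [sgt, sbox_eq_prod_sign_mul_sum, prod_ssumSign_eq_neg_one_pow_descents]

namespace TriArray

variable {n : ℕ}

def extendRow (k : Fin (n + 2) → ℤ) (A : TriArray (n + 1)) : TriArray (n + 2) :=
  fun i j => if h : i.1 < n + 1 then A ⟨i.1, h⟩ j else k ⟨j.1, by omega⟩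

def dropRow (A : TriArray (n + 2)) : TriArray (n + 1) :=
  fun i j => A ⟨i.1, by omega⟩ j

lemma extendRow_injective (k : Fin (n + 2) → ℤ) : Function.Injective (extendRow k) := by
  intro A B h
  funext i j
  simpa [extendRow, Fin.is_le] using congrFun (congrFun h ⟨i.1, by omega⟩) j

lemma extendRow_dropRow {A : TriArray (n + 2)} {k : Fin (n + 2) → ℤ} (hA : BottomRow A k) :
    extendRow k (dropRow A) = A := by
  funext i j
  by_cases h : i.1 < n + 1
  · simp [extendRow, dropRow, h]
  · simp only [extendRow, dif_neg h]
    exact (hA i (by omega) j).symm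

lemma bottomRow_dropRow (A : TriArray (n + 2)) : BottomRow (dropRow A) (A ⟨n, by omega⟩) := by
  rintro ⟨i, hi⟩ h j
  obtain rfl : i = n := by simp at h; omega
  rfl

lemma bottomRow_extendRow (k : Fin (n + 2) → ℤ) (A : TriArray (n + 1)) :
    BottomRow (extendRow k A) k := by
  intro i h j
  simp only [extendRow, dif_neg (show ¬i.1 < n + 1 by omega)]
  rfl

lemma rowDescents_extendRow (k : Fin (n + 2) → ℤ) (A : TriArray (n + 1)) :
    rowDescents (extendRow k A) = rowDescents A + descents k := by
  rw [rowDescents, Fin.sum_univ_castSucc]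
  simp [extendRow, rowDescents, descents, Fin.is_le]
  rfl

end TriArray

open TriArray

lemma BottomRow.eq {n : ℕ} {A : TriArray (n + 1)} {k l : Fin (n + 1) → ℤ}
    (hk : BottomRow A k) (hl : BottomRow A l) : k = l := by
  funext j
  exact (hk (Fin.last n) rfl j).symm.trans (hl (Fin.last n) rfl j)

lemma isGTPattern_extendRow_iff {n : ℕ} {A : TriArray (n + 1)} {k : Fin (n + 2) → ℤ}
    {l : Fin (n + 1) → ℤ} (hA : BottomRow A l) :
    IsGTPattern (extendRow k A) k ↔
      IsGTPattern A l ∧ l ∈ sboxRange (fun i => k i.castSucc) (fun i => k i.succ) := by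
  have hl (j : Fin (n + 1)) : A ⟨n, n.lt_succ_self⟩ j = l j := hA (Fin.last n) rfl j
  simp only [sboxRange, Fintype.mem_piFinset, mem_ssumRange]
  constructor
  · rintro ⟨-, h⟩
    refine ⟨⟨hA, fun i hi j => ?_⟩, fun j => ?_⟩
    · simpa [extendRow, hi, Fin.is_le] using h ⟨i, by omega⟩ (by simp; omega) j
    · have := h ⟨n, by omega⟩ (by simp) j
      simp only [extendRow, Nat.lt_irrefl, n.lt_succ_self, dif_pos, hl] at this
      exact this
  · rintro ⟨⟨-, h⟩, hbox⟩
    refine ⟨bottomRow_extendRow k A, fun ⟨i, hi⟩ hi' j => ?_⟩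
    by_cases hin : i + 1 < n + 1
    · simpa [extendRow, hin, show i < n + 1 by omega] using h ⟨i, by omega⟩ hin j
    · obtain rfl : n = i := by simp only at hi'; omega
      simp only [extendRow, Nat.lt_succ_self, Nat.lt_irrefl, dite_true, dite_false, hl]
      exact hbox j

lemma setOf_isGTPattern_eq_biUnion {n : ℕ} (k : Fin (n + 2) → ℤ) :
    {A | IsGTPattern A k} =
      ⋃ l ∈ (sboxRange (fun i => k i.castSucc) (fun i => k i.succ) : Set (Fin (n + 1) → ℤ)),
        extendRow k '' {A | IsGTPattern A l} := by
  ext A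
  simp only [Set.mem_ofPred_eq, Set.mem_iUnion, Set.mem_image, mem_coe, exists_prop]
  constructor
  · intro hA
    have hk := hA.1
    rw [← extendRow_dropRow hk, isGTPattern_extendRow_iff (bottomRow_dropRow A)] at hA
    exact ⟨_, hA.2, _, hA.1, extendRow_dropRow hk⟩
  · rintro ⟨l, hl, A, hA, rfl⟩
    exact (isGTPattern_extendRow_iff hA.1).2 ⟨hA, hl⟩

lemma setOf_isGTPattern_one (k : Fin 1 → ℤ) :
    {A : TriArray 1 | IsGTPattern A k} = {(fun i j => k ⟨j, by omega⟩ : TriArray 1)} := by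
  ext A
  simp only [Set.mem_ofPred_eq, Set.mem_singleton_iff]
  constructor
  · rintro ⟨hA, -⟩
    funext ⟨0, _⟩ j
    exact hA 0 rfl j
  · rintro rfl
    exact ⟨fun _ _ _ => rfl, fun i h => by omega⟩

lemma finite_setOf_isGTPattern : ∀ (n : ℕ) (k : Fin (n + 1) → ℤ),
    {A : TriArray (n + 1) | IsGTPattern A k}.Finite
  | 0, k => by
    rw [setOf_isGTPattern_one]
    exact Set.finite_singleton _
  | n + 1, k => by
    rw [setOf_isGTPattern_eq_biUnion]
    exact (finite_toSet _).biUnion fun l _ => (finite_setOf_isGTPattern n l).image _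

lemma pairwiseDisjoint_image_extendRow {n : ℕ} (k : Fin (n + 2) → ℤ)
    (s : Set (Fin (n + 1) → ℤ)) :
    s.PairwiseDisjoint fun l => extendRow k '' {A | IsGTPattern A l} := by
  intro l₁ _ l₂ _ hne
  refine Set.disjoint_left.2 ?_
  rintro _ ⟨A, hA₁, rfl⟩ ⟨B, hA₂, hAB⟩
  obtain rfl := extendRow_injective k hAB
  exact hne (hA₁.1.eq hA₂.1)

noncomputable def signedGTCount {n : ℕ} (k : Fin n → ℤ) : ℤ :=
  ∑ᶠ A ∈ {A : TriArray n | IsGTPattern A k}, (-1) ^ rowDescents A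

lemma signedGTCount_one (k : Fin 1 → ℤ) : signedGTCount k = 1 := by
  rw [signedGTCount, setOf_isGTPattern_one, finsum_mem_singleton]
  simp [rowDescents]

lemma signedGTCount_succ_succ {n : ℕ} (k : Fin (n + 2) → ℤ) :
    signedGTCount k = (-1) ^ descents k *
      ∑ l ∈ sboxRange (fun i => k i.castSucc) (fun i => k i.succ), signedGTCount l := by
  rw [signedGTCount, setOf_isGTPattern_eq_biUnion,
    finsum_mem_biUnion (pairwiseDisjoint_image_extendRow k _) (finite_toSet _)
      fun l _ => (finite_setOf_isGTPattern n l).image _,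
    finsum_mem_coe_finset, mul_sum]
  refine sum_congr rfl fun l _ => ?_
  rw [finsum_mem_image (extendRow_injective k).injOn, signedGTCount, mul_finsum_mem]
  simp only [rowDescents_extendRow, pow_add, mul_comm]

theorem sgt_eq_signedGTCount : ∀ {n : ℕ} (k : Fin (n + 1) → ℤ), sgt (n + 1) k = signedGTCount k
  | 0, k => (signedGTCount_one k).symm
  | n + 1, k => by
    rw [sgt_succ_succ, signedGTCount_succ_succ]
    simp only [sgt_eq_signedGTCount]

/-- For every `n ≥ 1` and `k ∈ ℤ^n`, `sgt k` equals the signed enumeration of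
(generalized) Gelfand–Tsetlin patterns with bottom row `k`, each counted with sign
`(-1)^{m(A)}` where `m(A)` is the number of strict descents in the rows of `A`
(a finite sum, since all entries lie between the minimum and the maximum of `k`). -/
theorem sgt_eq_signed_count (n : ℕ) (k : Fin (n + 1) → ℤ) :
    sgt (n + 1) k =
      ∑ᶠ A ∈ {A : TriArray (n + 1) | IsGTPattern A k}, (-1 : ℤ) ^ rowDescents A :=
  sgt_eq_signedGTCount k
end

section
/- Let n ≥ 1 and let k_1 < k_2 < … < k_n be strictly increasing integers. Then a triangular array T = (T_{i,j})_{1 ≤ j ≤ i ≤ n} of integers with bottom row (k_1,…,k_n) is a generalized monotone triangle if and only if it is a classical monotone triangle (i.e., T_{i+1,j} ≤ T_{i,j} ≤ T_{i+1,j+1} for 1 ≤ j ≤ i < n and T_{i,j} < T_{i,j+1} for 1 ≤ j < i ≤ n); moreover every such triangle has sign +1. Consequently smt(k) equals the number of classical monotone triangles with bottom row (k_1,…,k_n). -/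
/-!
When the bottom row is strictly increasing, condition (2) of interlacing, applied row by row
from the bottom up, forces every row to be strictly increasing and to lie between its
neighbours below; conditions (3) and (4) then never apply, so interlacing reduces to the
classical monotone-triangle inequalities. Both statistics entering the sign count strict
descents inside a row (the special configurations contain `T_{i,j} > T_{i,j+1}`), so they
vanish.
-/

theorem interlaces_iff_of_strictMono {m : ℕ} {l : Fin m → ℤ} {k : Fin (m + 1) → ℤ}
    (hk : StrictMono k) :
    Interlaces l k ↔ (∀ i : Fin m, k i.castSucc ≤ l i ∧ l i ≤ k i.succ) ∧ StrictMono l := by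
  have hk_succ (i : Fin m) : k i.castSucc < k i.succ := hk i.castSucc_lt_succ
  have hbetween (i : Fin m) :
      (min (k i.castSucc) (k i.succ) ≤ l i ∧ l i ≤ max (k i.castSucc) (k i.succ)) ↔
        k i.castSucc ≤ l i ∧ l i ≤ k i.succ := by
    rw [min_eq_left (hk_succ i).le, max_eq_right (hk_succ i).le]
  constructor
  · rintro ⟨h1, h2, -, -⟩
    have hb (i : Fin m) := (hbetween i).1 (h1 i)
    refine ⟨hb, ?_⟩
    cases m with
    | zero => exact fun i => i.elim0
    | succ m =>
      refine Fin.strictMono_iff_lt_succ.2 fun i => ?_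
      have hne := h2 i.castSucc (by simp) (hk_succ _).le (hk (by simp [Fin.lt_def])).le
      have hle : l i.castSucc ≤ l i.succ := (hb i.castSucc).2.trans (hb i.succ).1
      refine hle.lt_of_ne fun heq => hne ⟨?_, ?_⟩
      · exact le_antisymm (hb i.castSucc).2 (heq ▸ (hb i.succ).1)
      · exact le_antisymm (heq ▸ (hb i.castSucc).2) (hb i.succ).1
  · rintro ⟨hb, hl⟩
    refine ⟨fun i => (hbetween i).2 (hb i), ?_, ?_, ?_⟩
    · rintro j h - - ⟨e1, e2⟩
      have : l j < l ⟨j.1 + 1, h⟩ := hl (Fin.mk_lt_mk.2 j.1.lt_succ_self)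
      omega
    · intro i hgt heq
      exact absurd (hb i).1 (by omega)
    · intro i heq hgt
      exact absurd (hb i).2 (by omega)

theorem IsGMT.strictMono_row {n : ℕ} {T : TriArray (n + 1)} {k : Fin (n + 1) → ℤ}
    (hk : StrictMono k) (hT : IsGMT T k) (i : Fin (n + 1)) : StrictMono (T i) := by
  induction i using Fin.reverseInduction with
  | last =>
    intro a b hab
    rw [hT.1 (Fin.last n) rfl a, hT.1 (Fin.last n) rfl b]
    exact hk hab
  | cast i ih =>
    exact ((interlaces_iff_of_strictMono ih).1 (hT.2 i.castSucc (Nat.succ_lt_succ i.isLt))).2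

theorem IsMT.strictMono_row {n : ℕ} {T : TriArray n} {k : Fin n → ℤ}
    (hT : IsMT T k) (i : Fin n) : StrictMono (T i) :=
  Fin.strictMono_iff_lt_succ.2 (hT.2.2 i)

theorem isGMT_iff_isMT_of_strictMono {n : ℕ} {k : Fin (n + 1) → ℤ} (hk : StrictMono k)
    (T : TriArray (n + 1)) : IsGMT T k ↔ IsMT T k := by
  constructor
  · intro hT
    refine ⟨hT.1, fun i h j => ?_, fun i j => hT.strictMono_row hk i j.castSucc_lt_succ⟩
    exact ((interlaces_iff_of_strictMono (hT.strictMono_row hk ⟨i.1 + 1, h⟩)).1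
      (hT.2 i h)).1 j
  · intro hT
    refine ⟨hT.1, fun i h => ?_⟩
    exact (interlaces_iff_of_strictMono (hT.strictMono_row ⟨i.1 + 1, h⟩)).2
      ⟨hT.2.1 i h, hT.strictMono_row i⟩

theorem rowDescents_eq_zero {n : ℕ} {T : TriArray n} (hT : ∀ i, Monotone (T i)) :
    rowDescents T = 0 := by
  refine Finset.sum_eq_zero fun i _ => ?_
  rw [Finset.card_eq_zero, Finset.filter_eq_empty_iff]
  exact fun j _ => not_lt.2 (hT i j.castSucc_lt_succ.le)

theorem specialCount_eq_zero {n : ℕ} {T : TriArray n} (hT : ∀ i, Monotone (T i)) :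
    specialCount T = 0 := by
  refine Finset.sum_eq_zero fun i _ => ?_
  rw [Finset.card_eq_zero, Finset.filter_eq_empty_iff]
  rintro j - ⟨hgt, heq, -, -⟩
  rw [heq] at hgt
  exact not_lt.2 (hT i (Fin.mk_le_mk.2 j.1.le_succ)) hgt

theorem gmtSign_eq_one {n : ℕ} {T : TriArray n} (hT : ∀ i, Monotone (T i)) :
    gmtSign T = 1 := by
  rw [gmtSign, rowDescents_eq_zero hT, specialCount_eq_zero hT, pow_zero]

theorem finsum_mem_one_eq_ncard {α : Type*} (s : Set α) : ∑ᶠ i ∈ s, (1 : ℤ) = s.ncard := by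
  rcases s.infinite_or_finite with hs | hs
  · rw [hs.ncard, finsum_mem_eq_zero_of_infinite (by
      rwa [Function.support_const one_ne_zero, Set.inter_univ])]
    rfl
  · rw [← finsum_one, Nat.cast_finsum_mem hs, Nat.cast_one]

/-- For a strictly increasing bottom row, a triangular array is a generalized monotone
triangle iff it is a classical monotone triangle; every such triangle has sign `+1`;
consequently `smt k` equals the number of classical monotone triangles with bottom
row `k`. -/
theorem gmt_eq_mt_of_strictMono (n : ℕ) (k : Fin (n + 1) → ℤ) (hk : StrictMono k) :
    (∀ T : TriArray (n + 1), IsGMT T k ↔ IsMT T k) ∧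
    (∀ T : TriArray (n + 1), IsGMT T k → gmtSign T = 1) ∧
    smt k = (Set.ncard {T : TriArray (n + 1) | IsMT T k} : ℤ) := by
  have hsign (T : TriArray (n + 1)) (hT : IsGMT T k) : gmtSign T = 1 :=
    gmtSign_eq_one fun i => (hT.strictMono_row hk i).monotone
  refine ⟨isGMT_iff_isMT_of_strictMono hk, hsign, ?_⟩
  calc smt k = ∑ᶠ T ∈ {T : TriArray (n + 1) | IsGMT T k}, (1 : ℤ) :=
        finsum_mem_congr rfl hsign
    _ = _ := by
        simp only [finsum_mem_one_eq_ncard, isGMT_iff_isMT_of_strictMono hk]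
end
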